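/- Let n ≥ 1, m ≥ 1, and α ≥ 0 be integers, and let K ⊆ {1, …, n} be a subset with n ∈ K and cardinality q = |K|. Then at every point z ∈ ℂⁿ ∖ {0}, Σ_{j∈K} ∂/∂z̄_j [ z̄_n^{mα} · (∏_{i∈K} z̄_i^{m-1}) · z̄_j · r_m(z)^{-(α+q)} ] = (α+q) · m · z̄_n^{mα} · (∏_{i∈K} z̄_i^{m-1}) · r_m(z)^{-(α+q+1)} · Σ_{ℓ∈{1,…,n}∖K} |z_ℓ|^{2m}. (This scalar identity is the coefficient computation behind the formula ∂̄ u_{α,m}(k₁,…,k_q) = m Σ_{ℓ=1}^{n-1} z_ℓ^m u_{α,m}(ℓ, k₁, …, k_q).) -/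

import Mathlib

open Complex

/-- The Wirtinger derivative `∂f/∂z̄ⱼ = (1/2)(∂f/∂xⱼ + i ∂f/∂yⱼ)` of a function
`f : ℂⁿ → ℂ` at `z` with respect to the `j`-th antiholomorphic coordinate, expressed via
the real Fréchet derivative. -/
noncomputable def wirtingerBar {n : ℕ} (f : (Fin n → ℂ) → ℂ) (z : Fin n → ℂ) (j : Fin n) : ℂ :=
  (1 / 2) * (fderiv ℝ f z (Pi.single j 1) + Complex.I * fderiv ℝ f z (Pi.single j Complex.I))

/-!
Write `E f = z̄ⱼ ∂f/∂z̄ⱼ`. Each summand carries the factor `z̄ⱼ`, so its `∂/∂z̄ⱼ` is expressed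
through `E` applied to the other factors, and no division by `z̄ⱼ` occurs. `E` is a derivation,
the monomial `z̄ₙ^{mα} ∏_{i∈K} z̄ᵢ^{m-1}` is an eigenfunction of `E` with eigenvalue
`mα[j = n] + m - 1`, and `E r_m = m |zⱼ|^{2m}`. With `p = -(α + q)` the `j`-th summand is thus
`(monomial) r_m^{p-1} ((mα[j = n] + m) r_m - (α + q) m |zⱼ|^{2m})`, and summing over `j ∈ K`
leaves `m (α + q)` times `r_m - ∑_{j∈K} |zⱼ|^{2m} = ∑_{ℓ∉K} |z_ℓ|^{2m}`.
-/

section WirtingerCalculus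

variable {n : ℕ} {f g : (Fin n → ℂ) → ℂ} {z : Fin n → ℂ} {j : Fin n}

lemma wirtingerBar_mul (hf : DifferentiableAt ℝ f z) (hg : DifferentiableAt ℝ g z) :
    wirtingerBar (fun w => f w * g w) z j =
      wirtingerBar f z j * g z + f z * wirtingerBar g z j := by
  simp only [wirtingerBar, fderiv_fun_mul hf hg, add_apply, smul_apply, smul_eq_mul]
  ring

lemma wirtingerBar_sum {ι : Type*} (s : Finset ι) {f : ι → (Fin n → ℂ) → ℂ}
    (hf : ∀ i ∈ s, DifferentiableAt ℝ (f i) z) :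
    wirtingerBar (fun w => ∑ i ∈ s, f i w) z j = ∑ i ∈ s, wirtingerBar (f i) z j := by
  simp only [wirtingerBar, fderiv_fun_sum hf, FunLike.coe_sum, Finset.sum_apply,
    mul_add, Finset.mul_sum, Finset.sum_add_distrib]

lemma wirtingerBar_prod {ι : Type*} [DecidableEq ι] (s : Finset ι) {f : ι → (Fin n → ℂ) → ℂ}
    (hf : ∀ i ∈ s, DifferentiableAt ℝ (f i) z) :
    wirtingerBar (fun w => ∏ i ∈ s, f i w) z j =
      ∑ i ∈ s, (∏ k ∈ s.erase i, f k z) * wirtingerBar (f i) z j := by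
  simp only [wirtingerBar, fderiv_finsetProd hf, FunLike.coe_sum, Finset.sum_apply,
    smul_apply, smul_eq_mul, Finset.mul_sum, ← Finset.sum_add_distrib]
  exact Finset.sum_congr rfl fun i _ => by ring

lemma wirtingerBar_comp {h : ℂ → ℂ} (hh : DifferentiableAt ℂ h (f z))
    (hf : DifferentiableAt ℝ f z) :
    wirtingerBar (fun w => h (f w)) z j = deriv h (f z) * wirtingerBar f z j := by
  have := (hh.hasDerivAt.comp_hasFDerivAt z hf.hasFDerivAt).fderiv
  simp only [wirtingerBar, Function.comp_def] at this ⊢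
  simp only [this, smul_apply, smul_eq_mul]
  ring

lemma wirtingerBar_apply (i : Fin n) : wirtingerBar (fun w => w i) z j = 0 := by
  simp only [wirtingerBar, (hasFDerivAt_apply i z).fderiv, ContinuousLinearMap.proj_apply,
    Pi.single_apply]
  split_ifs <;> norm_num

lemma wirtingerBar_conj_apply (i : Fin n) :
    wirtingerBar (fun w => starRingEnd ℂ (w i)) z j = if i = j then 1 else 0 := by
  have : HasFDerivAt (fun w : Fin n → ℂ => starRingEnd ℂ (w i))
      (conjCLE.toContinuousLinearMap.comp (ContinuousLinearMap.proj i)) z :=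
    conjCLE.hasFDerivAt.comp z (hasFDerivAt_apply i z)
  simp only [wirtingerBar, this.fderiv, ContinuousLinearMap.comp_apply,
    ContinuousLinearMap.proj_apply, Pi.single_apply]
  split_ifs <;> norm_num

end WirtingerCalculus

section EulerOperator

variable {n : ℕ} {f g G R : (Fin n → ℂ) → ℂ} {z : Fin n → ℂ} {j : Fin n}

lemma conj_mul_wirtingerBar_mul {a b : ℂ} (hf : DifferentiableAt ℝ f z)
    (hg : DifferentiableAt ℝ g z) (ha : starRingEnd ℂ (z j) * wirtingerBar f z j = a * f z)
    (hb : starRingEnd ℂ (z j) * wirtingerBar g z j = b * g z) :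
    starRingEnd ℂ (z j) * wirtingerBar (fun w => f w * g w) z j = (a + b) * (f z * g z) := by
  rw [wirtingerBar_mul hf hg]
  linear_combination g z * ha + f z * hb

lemma conj_mul_wirtingerBar_prod {ι : Type*} [DecidableEq ι] (s : Finset ι)
    {f : ι → (Fin n → ℂ) → ℂ} {c : ι → ℂ} (hf : ∀ i ∈ s, DifferentiableAt ℝ (f i) z)
    (hc : ∀ i ∈ s, starRingEnd ℂ (z j) * wirtingerBar (f i) z j = c i * f i z) :
    starRingEnd ℂ (z j) * wirtingerBar (fun w => ∏ i ∈ s, f i w) z j =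
      (∑ i ∈ s, c i) * ∏ i ∈ s, f i z := by
  rw [wirtingerBar_prod s hf, Finset.mul_sum, Finset.sum_mul]
  refine Finset.sum_congr rfl fun i hi => ?_
  rw [← Finset.mul_prod_erase s _ hi]
  linear_combination (∏ k ∈ s.erase i, f k z) * hc i hi

lemma conj_mul_wirtingerBar_conj_pow (i : Fin n) (k : ℕ) :
    starRingEnd ℂ (z j) * wirtingerBar (fun w => starRingEnd ℂ (w i) ^ k) z j =
      (if i = j then (k : ℂ) else 0) * starRingEnd ℂ (z i) ^ k := by
  rw [wirtingerBar_comp (h := fun x => x ^ k) (differentiableAt_pow k) (by fun_prop),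
    wirtingerBar_conj_apply, deriv_pow_field]
  split_ifs with hij
  · subst hij
    rcases k with _ | k
    · simp
    · rw [pow_succ _ k]
      simp only [Nat.add_sub_cancel]
      ring
  · simp

lemma conj_mul_wirtingerBar_pow_mul_conj_pow (i : Fin n) (k : ℕ) :
    starRingEnd ℂ (z j) * wirtingerBar (fun w => w i ^ k * starRingEnd ℂ (w i) ^ k) z j =
      (if i = j then (k : ℂ) else 0) * (z i ^ k * starRingEnd ℂ (z i) ^ k) := by
  have hhol : starRingEnd ℂ (z j) * wirtingerBar (fun w => w i ^ k) z j = 0 * z i ^ k := by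
    rw [wirtingerBar_comp (h := fun x => x ^ k) (differentiableAt_pow k) (by fun_prop),
      wirtingerBar_apply]
    ring
  simpa using conj_mul_wirtingerBar_mul (by fun_prop) (by fun_prop) hhol
    (conj_mul_wirtingerBar_conj_pow i k)

lemma conj_mul_wirtingerBar_conj_pow_mul_prod {s : Finset (Fin n)} (hj : j ∈ s) (i₀ : Fin n)
    (a k : ℕ) :
    starRingEnd ℂ (z j) *
        wirtingerBar (fun w => starRingEnd ℂ (w i₀) ^ a * ∏ i ∈ s, starRingEnd ℂ (w i) ^ k) z j =
      ((if i₀ = j then (a : ℂ) else 0) + k) *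
        (starRingEnd ℂ (z i₀) ^ a * ∏ i ∈ s, starRingEnd ℂ (z i) ^ k) := by
  have hprod := conj_mul_wirtingerBar_prod (z := z) (j := j) s (by fun_prop)
    fun i _ => conj_mul_wirtingerBar_conj_pow i k
  rw [Finset.sum_ite_eq' s j, if_pos hj] at hprod
  exact conj_mul_wirtingerBar_mul (by fun_prop) (by fun_prop)
    (conj_mul_wirtingerBar_conj_pow i₀ a) hprod

lemma wirtingerBar_mul_conj_mul_zpow (hG : DifferentiableAt ℝ G z)
    (hR : DifferentiableAt ℝ R z) (hR0 : R z ≠ 0) {c : ℂ}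
    (hc : starRingEnd ℂ (z j) * wirtingerBar G z j = c * G z) (p : ℤ) :
    wirtingerBar (fun w => G w * starRingEnd ℂ (w j) * R w ^ p) z j =
      G z * R z ^ (p - 1) *
        ((c + 1) * R z + p * (starRingEnd ℂ (z j) * wirtingerBar R z j)) := by
  have hzpow : DifferentiableAt ℂ (fun x : ℂ => x ^ p) (R z) :=
    differentiableAt_zpow.mpr (Or.inl hR0)
  have hGconj : DifferentiableAt ℝ (fun w => G w * starRingEnd ℂ (w j)) z := by fun_prop
  have hRzpow : DifferentiableAt ℝ (fun w => R w ^ p) z := (hzpow.restrictScalars ℝ).comp z hR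
  rw [wirtingerBar_mul hGconj hRzpow, wirtingerBar_mul hG (by fun_prop), wirtingerBar_conj_apply,
    if_pos rfl, wirtingerBar_comp hzpow hR, deriv_zpow]
  have hRp : R z ^ p = R z ^ (p - 1) * R z := by
    rw [zpow_sub_one₀ hR0, inv_mul_cancel_right₀ hR0]
  rw [hRp]
  linear_combination R z ^ (p - 1) * R z * hc

end EulerOperator

section NormPowSum

variable {n : ℕ} {z : Fin n → ℂ} {j : Fin n}

lemma ofReal_norm_pow_two_mul (x : ℂ) (m : ℕ) :
    ((‖x‖ ^ (2 * m) : ℝ) : ℂ) = x ^ m * starRingEnd ℂ x ^ m := by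
  rw [pow_mul, Complex.sq_norm, ← mul_pow, Complex.mul_conj]
  push_cast
  ring

lemma ofReal_sum_norm_pow_eq (m : ℕ) :
    (fun w : Fin n → ℂ => ((∑ i, ‖w i‖ ^ (2 * m) : ℝ) : ℂ)) =
      fun w => ∑ i, w i ^ m * starRingEnd ℂ (w i) ^ m := by
  funext w
  rw [Complex.ofReal_sum]
  exact Finset.sum_congr rfl fun i _ => ofReal_norm_pow_two_mul (w i) m

lemma differentiableAt_ofReal_sum_norm_pow (m : ℕ) :
    DifferentiableAt ℝ (fun w : Fin n → ℂ => ((∑ i, ‖w i‖ ^ (2 * m) : ℝ) : ℂ)) z := by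
  rw [ofReal_sum_norm_pow_eq]
  fun_prop

lemma conj_mul_wirtingerBar_ofReal_sum_norm_pow (m : ℕ) :
    starRingEnd ℂ (z j) * wirtingerBar (fun w => ((∑ i, ‖w i‖ ^ (2 * m) : ℝ) : ℂ)) z j =
      m * ((‖z j‖ ^ (2 * m) : ℝ) : ℂ) := by
  rw [ofReal_sum_norm_pow_eq, wirtingerBar_sum _ (by fun_prop), Finset.mul_sum,
    Finset.sum_congr rfl fun i _ => conj_mul_wirtingerBar_pow_mul_conj_pow i m,
    ofReal_norm_pow_two_mul]
  simp

lemma ofReal_sum_norm_pow_ne_zero (hz : z ≠ 0) (m : ℕ) :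
    ((∑ i, ‖z i‖ ^ (2 * m) : ℝ) : ℂ) ≠ 0 := by
  obtain ⟨i, hi⟩ := Function.ne_iff.mp hz
  have hpos : 0 < ∑ i, ‖z i‖ ^ (2 * m) :=
    Finset.sum_pos' (fun i _ => by positivity) ⟨i, Finset.mem_univ i, by positivity⟩
  exact_mod_cast hpos.ne'

end NormPowSum

/-- For integers `m ≥ 1`, `α ≥ 0` and a subset `K` of the coordinates of
`ℂ^(n+1)` containing the last one, with `q = |K|`, at every `z ≠ 0`,
`∑_{j∈K} ∂/∂z̄_j [ z̄ₙ^{mα} (∏_{i∈K} z̄ᵢ^{m-1}) z̄ⱼ r_m(z)^{-(α+q)} ]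
  = (α+q) m z̄ₙ^{mα} (∏_{i∈K} z̄ᵢ^{m-1}) r_m(z)^{-(α+q+1)} ∑_{ℓ∉K} |z_ℓ|^{2m}`,
where `r_m(z) = ∑ᵢ |zᵢ|^{2m}`. -/
theorem u_alpha_m_dbar_formula (n m α : ℕ) (hm : 1 ≤ m)
    (K : Finset (Fin (n + 1))) (hK : Fin.last n ∈ K) :
    ∀ z : Fin (n + 1) → ℂ, z ≠ 0 →
      ∑ j ∈ K,
        wirtingerBar
          (fun w =>
            (starRingEnd ℂ (w (Fin.last n))) ^ (m * α) *
              (∏ i ∈ K, (starRingEnd ℂ (w i)) ^ (m - 1)) *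
              starRingEnd ℂ (w j) *
              (((∑ i : Fin (n + 1), ‖w i‖ ^ (2 * m) : ℝ) : ℂ)) ^
                (-(α + K.card : ℤ)))
          z j
        = ((α + K.card : ℕ) : ℂ) * (m : ℂ) *
            (starRingEnd ℂ (z (Fin.last n))) ^ (m * α) *
            (∏ i ∈ K, (starRingEnd ℂ (z i)) ^ (m - 1)) *
            (((∑ i : Fin (n + 1), ‖z i‖ ^ (2 * m) : ℝ) : ℂ)) ^
              (-(α + K.card + 1 : ℤ)) *
            ∑ ℓ ∈ Kᶜ, ((‖z ℓ‖ ^ (2 * m) : ℝ) : ℂ) := by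
  intro z hz
  rw [Finset.sum_congr rfl fun j hj => wirtingerBar_mul_conj_mul_zpow (by fun_prop)
    (differentiableAt_ofReal_sum_norm_pow m) (ofReal_sum_norm_pow_ne_zero hz m)
    (conj_mul_wirtingerBar_conj_pow_mul_prod hj (Fin.last n) (m * α) (m - 1)) _]
  simp only [conj_mul_wirtingerBar_ofReal_sum_norm_pow]
  have hcoeff :
      ∑ j ∈ K, ((if Fin.last n = j then ((m * α : ℕ) : ℂ) else 0) + ((m - 1 : ℕ) : ℂ) + 1) =
        m * (α + K.card) := by
    rw [Finset.sum_add_distrib, Finset.sum_add_distrib, Finset.sum_ite_eq, if_pos hK,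
      Finset.sum_const, Finset.sum_const, Nat.cast_sub hm]
    push_cast
    ring
  rw [← Finset.mul_sum, Finset.sum_add_distrib, ← Finset.sum_mul, hcoeff, ← Finset.mul_sum,
    ← Finset.mul_sum, show -(α + K.card : ℤ) - 1 = -(α + K.card + 1) by ring]
  have hN : (((∑ i : Fin (n + 1), ‖z i‖ ^ (2 * m) : ℝ) : ℂ)) =
      ∑ j ∈ K, ((‖z j‖ ^ (2 * m) : ℝ) : ℂ) + ∑ ℓ ∈ Kᶜ, ((‖z ℓ‖ ^ (2 * m) : ℝ) : ℂ) := by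
    rw [Finset.sum_add_sum_compl, ← Complex.ofReal_sum]
  push_cast at hN ⊢
  linear_combination (α + K.card : ℂ) * m *
    (starRingEnd ℂ (z (Fin.last n)) ^ (m * α) * ∏ i ∈ K, starRingEnd ℂ (z i) ^ (m - 1)) *
    (∑ i, (‖z i‖ : ℂ) ^ (2 * m)) ^ (-(α + K.card + 1 : ℤ)) * hN
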